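/- Let d be a positive integer, let c > 0, and suppose λ = (c, c, …, c) ∈ ℝ^d. Let (T_n) be an arbitrary sequence of real-valued random variables, and let (λ̂_n) be a sequence of random vectors in ℝ^d converging in probability to λ. Define the Satorra-Bentler weight vector λ̂_n^{SB} whose every coordinate equals the mean (1/d) Σ_{j=1}^d λ̂_{n,j}. Then λ̂_n^{SB} converges in probability to λ, and consequently the Satorra-Bentler p-value p̂_{n,SB} = 1 − H(T_n; λ̂_n^{SB}) satisfies p̂_{n,SB} − p_n → 0 in probability, where p_n = 1 − H(T_n; λ). -/

import Mathlib

open MeasureTheory ProbabilityTheory Filter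

/-- The product of `d` independent standard normal distributions. -/
noncomputable def stdGaussPi (d : ℕ) : Measure (Fin d → ℝ) :=
  Measure.pi fun _ => gaussianReal 0 1

/-- `mixCDF d lam q = H(q; λ) = P(∑ j, λ_j Z_j² ≤ q)` for `Z_1, …, Z_d` IID standard normal. -/
noncomputable def mixCDF (d : ℕ) (lam : Fin d → ℝ) (q : ℝ) : ℝ :=
  (stdGaussPi d {z | ∑ j, lam j * z j ^ 2 ≤ q}).toReal

/-!
Averaging cannot increase the sup-distance to a constant vector, so the Satorra–Bentler weights
are consistent whenever the raw estimates are. For a constant weight vector,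
`H(q; a, …, a) = F(q / a)` with `F` the χ²_d distribution function, which is continuous because
the spheres `∑ z_j² = t` are Gaussian-null. Since `q / a = exp (log q - log a)` for `q > 0`,
uniform continuity of `F ∘ exp` makes `a ↦ H(·; a, …, a)` continuous at `c` uniformly in `q`, and
the p-value difference inherits the consistency of the averaged weight.
-/

open Real Topology

theorem Continuous.uniformContinuous_of_tendsto_atBot_atTop {f : ℝ → ℝ} (hf : Continuous f)
    {a b : ℝ} (ha : Tendsto f atBot (𝓝 a)) (hb : Tendsto f atTop (𝓝 b)) :
    UniformContinuous f := by
  -- `r` is uniformly continuous with the same limits as `f`, so `f - r` vanishes at infinity.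
  set r : ℝ → ℝ := fun x => a + (b - a) * max 0 (min 1 x)
  have hr : UniformContinuous r :=
    uniformContinuous_const.add <| (uniformContinuous_const_smul (b - a)).comp
      ((LipschitzWith.id.const_min 1).const_max 0).uniformContinuous
  have hr_atBot : r =ᶠ[atBot] fun _ => a := by
    filter_upwards [eventually_le_atBot 0] with x hx
    simp [r, min_eq_right (hx.trans zero_le_one), hx]
  have hr_atTop : r =ᶠ[atTop] fun _ => b := by
    filter_upwards [eventually_ge_atTop 1] with x hx
    simp [r, hx]
  have hfr : Tendsto (fun x => f x - r x) (cocompact ℝ) (𝓝 0) := by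
    rw [cocompact_eq_atBot_atTop, tendsto_sup]
    exact ⟨by simpa using ha.sub (tendsto_const_nhds.congr' hr_atBot.symm),
      by simpa using hb.sub (tendsto_const_nhds.congr' hr_atTop.symm)⟩
  simpa using ((hf.sub hr.continuous).uniformContinuous_of_tendsto_cocompact hfr).add hr

theorem ProbabilityTheory.continuous_cdf (μ : Measure ℝ) [IsProbabilityMeasure μ]
    [NullSingletonClass μ] : Continuous (cdf μ) := by
  refine continuous_iff_continuousAt.2 fun x => ?_
  rw [(monotone_cdf μ).continuousAt_iff_leftLim_eq_rightLim, (cdf μ).rightLim_eq]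
  have h := (cdf μ).measure_singleton x
  rw [measure_cdf, measure_singleton, eq_comm, ENNReal.ofReal_eq_zero] at h
  linarith [(monotone_cdf μ).leftLim_le (le_refl x)]

theorem measure_setOf_sq_eq (ν : Measure ℝ) [NullSingletonClass ν] (s : ℝ) :
    ν {x | x ^ 2 = s} = 0 := by
  refine measure_mono_null (fun x (hx : x ^ 2 = s) => ?_)
    ((Set.toFinite {√s, -√s}).countable.measure_zero ν)
  have : |x| = √s := by rw [← hx, sqrt_sq_eq_abs]
  simpa using (abs_eq (sqrt_nonneg s)).1 this

instance (d : ℕ) : IsProbabilityMeasure (stdGaussPi d) := by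
  unfold stdGaussPi; infer_instance

theorem stdGaussPi_setOf_sum_sq_eq (d : ℕ) [NeZero d] (t : ℝ) :
    stdGaussPi d {z | ∑ j, z j ^ 2 = t} = 0 := by
  obtain ⟨m, rfl⟩ := Nat.exists_eq_succ_of_ne_zero (NeZero.ne d)
  have : NullSingletonClass (gaussianReal 0 1) := nullSingletonClass_gaussianReal one_ne_zero
  have e := measurePreserving_piFinSuccAbove (fun _ : Fin (m + 1) => gaussianReal 0 1) 0
  rw [stdGaussPi, ← e.symm.measure_preimage_equiv]
  have hpre : (MeasurableEquiv.piFinSuccAbove (fun _ => ℝ) 0).symm ⁻¹' {z | ∑ j, z j ^ 2 = t}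
      = {p : ℝ × (Fin m → ℝ) | p.1 ^ 2 = t - ∑ j, p.2 j ^ 2} := by
    ext ⟨x, y⟩
    simp [Fin.sum_univ_succ, eq_sub_iff_add_eq]
  rw [hpre, Measure.prod_apply_symm (measurableSet_eq_fun (by fun_prop) (by fun_prop))]
  simp [measure_setOf_sq_eq]

noncomputable def chiSquared (d : ℕ) : Measure ℝ :=
  (stdGaussPi d).map fun z => ∑ j, z j ^ 2

instance (d : ℕ) : IsProbabilityMeasure (chiSquared d) :=
  Measure.isProbabilityMeasure_map
    (by fun_prop : Measurable fun z : Fin d → ℝ => ∑ j, z j ^ 2).aemeasurable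

instance (d : ℕ) [NeZero d] : NullSingletonClass (chiSquared d) where
  measure_singleton t := by
    rw [chiSquared, Measure.map_apply (by fun_prop) (measurableSet_singleton t)]
    exact stdGaussPi_setOf_sum_sq_eq d t

theorem cdf_chiSquared_of_nonpos (d : ℕ) [NeZero d] {t : ℝ} (ht : t ≤ 0) :
    cdf (chiSquared d) t = 0 := by
  have : chiSquared d (Set.Iic t) = 0 := by
    rw [chiSquared, Measure.map_apply (by fun_prop) measurableSet_Iic]
    refine measure_mono_null (fun z (hz : ∑ j, z j ^ 2 ≤ t) => ?_) (stdGaussPi_setOf_sum_sq_eq d 0)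
    exact le_antisymm (hz.trans ht) (Finset.sum_nonneg fun j _ => sq_nonneg (z j))
  simp [cdf_eq_real, measureReal_def, this]

theorem mixCDF_const (d : ℕ) {a : ℝ} (ha : 0 < a) (q : ℝ) :
    mixCDF d (fun _ => a) q = cdf (chiSquared d) (q / a) := by
  rw [cdf_eq_real, measureReal_def, chiSquared, Measure.map_apply (by fun_prop) measurableSet_Iic,
    mixCDF]
  congr 2
  ext z
  simp [← Finset.mul_sum, le_div_iff₀ ha, mul_comm]

theorem tendstoUniformly_mixCDF_const (d : ℕ) [NeZero d] {c : ℝ} (hc : 0 < c) :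
    TendstoUniformly (fun a => mixCDF d fun _ => a) (mixCDF d fun _ => c) (𝓝 c) := by
  set F := cdf (chiSquared d)
  have hF := continuous_cdf (chiSquared d)
  have hG : UniformContinuous (F ∘ exp) :=
    (hF.comp continuous_exp).uniformContinuous_of_tendsto_atBot_atTop
      ((hF.tendsto 0).comp tendsto_exp_atBot) ((tendsto_cdf_atTop _).comp tendsto_exp_atTop)
  rw [Metric.tendstoUniformly_iff]
  intro ε hε
  obtain ⟨δ, hδ, hGδ⟩ := Metric.uniformContinuous_iff.1 hG ε hε
  have hlog : ∀ᶠ a in 𝓝 c, dist (log a) (log c) < δ :=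
    (continuousAt_log hc.ne').eventually (Metric.ball_mem_nhds _ hδ)
  filter_upwards [hlog, eventually_gt_nhds hc] with a hac ha q
  rw [mixCDF_const d ha, mixCDF_const d hc]
  rcases le_or_gt q 0 with hq | hq
  · rw [cdf_chiSquared_of_nonpos d (div_nonpos_of_nonpos_of_nonneg hq hc.le),
      cdf_chiSquared_of_nonpos d (div_nonpos_of_nonpos_of_nonneg hq ha.le), dist_self]
    exact hε
  · have hexp : ∀ b > 0, q / b = exp (log q - log b) := fun b hb => by
      rw [exp_sub, exp_log hq, exp_log hb]
    rw [hexp c hc, hexp a ha]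
    exact hGδ (by rwa [dist_sub_left, dist_comm])

theorem norm_const_mean_sub_const_le {ι : Type*} [Fintype ι] (v : ι → ℝ) (c : ℝ) :
    ‖(fun _ : ι => (∑ j, v j) / Fintype.card ι) - fun _ => c‖ ≤ ‖v - fun _ => c‖ := by
  refine (pi_norm_le_iff_of_nonneg (norm_nonneg _)).2 fun i => ?_
  have : Nonempty ι := ⟨i⟩
  have hcard : (0 : ℝ) < Fintype.card ι := by exact_mod_cast Fintype.card_pos
  rw [Pi.sub_apply, norm_eq_abs, div_sub' hcard.ne', abs_div, abs_of_pos hcard, div_le_iff₀ hcard]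
  calc |∑ j, v j - Fintype.card ι * c| = |∑ j, (v j - c)| := by
        simp [Finset.sum_sub_distrib, mul_comm]
    _ ≤ ∑ j, |v j - c| := Finset.abs_sum_le_sum_abs _ _
    _ ≤ ∑ _j : ι, ‖v - fun _ => c‖ :=
        Finset.sum_le_sum fun j _ => norm_le_pi_norm (v - fun _ => c) j
    _ = ‖v - fun _ => c‖ * Fintype.card ι := by simp [mul_comm]

theorem tendsto_measure_lt_of_modulus {ι Ω : Type*} [MeasurableSpace Ω] {μ : Measure Ω}
    {l : Filter ι} {f g : ι → Ω → ℝ}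
    (hg : ∀ δ > 0, Tendsto (fun i => μ {ω | δ < g i ω}) l (𝓝 0))
    (hfg : ∀ ε > 0, ∃ δ > 0, ∀ i ω, g i ω < δ → f i ω < ε) :
    ∀ ε > 0, Tendsto (fun i => μ {ω | ε < f i ω}) l (𝓝 0) := by
  intro ε hε
  obtain ⟨δ, hδ, hfgδ⟩ := hfg ε hε
  refine tendsto_of_tendsto_of_tendsto_of_le_of_le tendsto_const_nhds (hg (δ / 2) (half_pos hδ))
    (fun _ => zero_le) fun i => measure_mono fun ω (hω : ε < f i ω) => show δ / 2 < g i ω from ?_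
  by_contra! hgω
  linarith [hfgδ i ω (by linarith)]

theorem stmt12_general {Ω : Type*} [MeasurableSpace Ω] (P : Measure Ω)
    (d : ℕ) (hd : 0 < d) (c : ℝ) (hc : 0 < c)
    (lam : Fin d → ℝ) (hlam : lam = fun _ => c)
    (T : ℕ → Ω → ℝ)
    (lamHat : ℕ → Ω → Fin d → ℝ)
    (hprob : ∀ ε > 0, Tendsto (fun n => P {ω | ε < ‖lamHat n ω - lam‖}) atTop (nhds 0))
    -- the Satorra-Bentler weight vector: every coordinate equals the mean of `lamHat n ω`
    (lamSB : ℕ → Ω → Fin d → ℝ)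
    (hSB : ∀ n ω, lamSB n ω = fun _ => (∑ j, lamHat n ω j) / d) :
    (∀ ε > 0, Tendsto (fun n => P {ω | ε < ‖lamSB n ω - lam‖}) atTop (nhds 0)) ∧
    (∀ ε > 0,
      Tendsto
        (fun n => P {ω |
          ε < |(1 - mixCDF d (lamSB n ω) (T n ω)) - (1 - mixCDF d lam (T n ω))|})
        atTop (nhds 0)) := by
  have : NeZero d := ⟨hd.ne'⟩
  have hSB_consistent : ∀ ε > 0, Tendsto (fun n => P {ω | ε < ‖lamSB n ω - lam‖}) atTop (𝓝 0) :=
    tendsto_measure_lt_of_modulus hprob fun ε hε => ⟨ε, hε, fun n ω h => lt_of_le_of_lt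
      (by simpa [hSB, hlam] using norm_const_mean_sub_const_le (lamHat n ω) c) h⟩
  refine ⟨hSB_consistent, tendsto_measure_lt_of_modulus hSB_consistent fun ε hε => ?_⟩
  obtain ⟨δ, hδ, hH⟩ := Metric.eventually_nhds_iff.1
    (Metric.tendstoUniformly_iff.1 (tendstoUniformly_mixCDF_const d hc) ε hε)
  refine ⟨δ, hδ, fun n ω h => ?_⟩
  rw [hSB, hlam, ← dist_eq_norm, dist_pi_const] at h
  rw [hSB, hlam, sub_sub_sub_cancel_left, ← Real.dist_eq]
  exact hH h (T n ω)

theorem stmt12 {Ω : Type*} [MeasurableSpace Ω] (P : Measure Ω) [IsProbabilityMeasure P]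
    (d : ℕ) (hd : 0 < d) (c : ℝ) (hc : 0 < c)
    (lam : Fin d → ℝ) (hlam : lam = fun _ => c)
    (T : ℕ → Ω → ℝ) (hT : ∀ n, Measurable (T n))
    (lamHat : ℕ → Ω → Fin d → ℝ) (hlamHat : ∀ n, Measurable (lamHat n))
    (hprob : ∀ ε > 0, Tendsto (fun n => P {ω | ε < ‖lamHat n ω - lam‖}) atTop (nhds 0))
    -- the Satorra-Bentler weight vector: every coordinate equals the mean of `lamHat n ω`
    (lamSB : ℕ → Ω → Fin d → ℝ)
    (hSB : ∀ n ω, lamSB n ω = fun _ => (∑ j, lamHat n ω j) / d) :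
    (∀ ε > 0, Tendsto (fun n => P {ω | ε < ‖lamSB n ω - lam‖}) atTop (nhds 0)) ∧
    (∀ ε > 0,
      Tendsto
        (fun n => P {ω |
          ε < |(1 - mixCDF d (lamSB n ω) (T n ω)) - (1 - mixCDF d lam (T n ω))|})
        atTop (nhds 0)) :=
  stmt12_general P d hd c hc lam hlam T lamHat hprob lamSB hSB
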